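/- arXiv:2404.17470 — 5 statements merged into one kernel-verified Lean document; each statement's English description precedes it below -/
import Mathlib

section
/- Let h be a subalgebra of so(1,n+1) (n ≥ 1) that is indecomposable (admits no nondegenerate invariant subspace of ℝ^{1,n+1}) and non-irreducible. Then h preserves a null line of ℝ^{1,n+1}, i.e. h is conjugate to a subalgebra of the parabolic p = stab(ℝ·e_-) = (ℝ ⊕ so(n)) ⋉ ℝ^n. -/
open scoped BigOperators

attribute [local instance 100] LieRing.ofAssociativeRing

/-- Minkowski space `ℝ^{1,n+1}` in a Witt basis, coordinates indexed by `Fin (n+2)`: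
index `0` is `e₋`, indices `1,…,n` are the Euclidean directions, index `n+1` is `e₊`. -/
abbrev Vm (n : ℕ) : Type := Fin (n + 2) → ℝ

def lastIx (n : ℕ) : Fin (n + 2) := Fin.last (n + 1)

def midIx (n : ℕ) (i : Fin n) : Fin (n + 2) := ⟨i.1 + 1, by omega⟩

/-- The Minkowski inner product in the Witt basis. -/
noncomputable def wB (n : ℕ) (u v : Vm n) : ℝ :=
  u 0 * v (lastIx n) + u (lastIx n) * v 0 + ∑ i : Fin n, u (midIx n i) * v (midIx n i)

noncomputable def eMinus (n : ℕ) : Vm n := Pi.single 0 1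
noncomputable def ePlus (n : ℕ) : Vm n := Pi.single (lastIx n) 1
noncomputable def eMid (n : ℕ) (i : Fin n) : Vm n := Pi.single (midIx n i) 1

/-- The embedding `ℝⁿ ≃ V₀ ⊆ V`. -/
noncomputable def vmid (n : ℕ) (c : Fin n → ℝ) : Vm n := ∑ i : Fin n, c i • eMid n i

/-- Membership in `so(1,n+1)`: skew-symmetry with respect to the Minkowski product. -/
def IsSkewB (n : ℕ) (A : Module.End ℝ (Vm n)) : Prop :=
  ∀ u v : Vm n, wB n (A u) v + wB n u (A v) = 0

/-- The element `v̄ ∈ 𝔤₋` associated with `v ∈ ℝⁿ`: `v̄ e₊ = v`, `v̄ eᵢ = -vᵢ e₋`, `v̄ e₋ = 0`. -/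
noncomputable def barE (n : ℕ) (v : Fin n → ℝ) : Module.End ℝ (Vm n) :=
  (LinearMap.proj (lastIx n) : Vm n →ₗ[ℝ] ℝ).smulRight (vmid n v)
    - (∑ i : Fin n, v i • (LinearMap.proj (midIx n i) : Vm n →ₗ[ℝ] ℝ)).smulRight (eMinus n)

/-- The `ℝ`-component of the projection of `X` to `𝔤₀ ≅ ℝ ⊕ so(n)`. -/
noncomputable def piR (n : ℕ) (X : Module.End ℝ (Vm n)) : ℝ :=
  wB n (X (eMinus n)) (ePlus n)

/-- The projection `π₋ : 𝔭 → 𝔤₋ ≅ ℝⁿ`. -/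
noncomputable def piMinusE (n : ℕ) (X : Module.End ℝ (Vm n)) : Fin n → ℝ :=
  fun i => wB n (X (ePlus n)) (eMid n i)

/-- The action of the `𝔤₀ ≅ 𝔠𝔬(n)`-projection `π₀(X)` of `X` on `ℝⁿ`. -/
noncomputable def pi0Act (n : ℕ) (X : Module.End ℝ (Vm n)) (c : Fin n → ℝ) : Fin n → ℝ :=
  fun j => piR n X * c j + ∑ i : Fin n, wB n (X (eMid n i)) (eMid n j) * c i

/-- Membership in the parabolic `𝔭 = stab(ℝ·e₋) ⊆ so(1,n+1)`. -/
def MemP (n : ℕ) (X : Module.End ℝ (Vm n)) : Prop :=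
  IsSkewB n X ∧ X (eMinus n) ∈ Submodule.span ℝ {eMinus n}

/-- Indecomposability: no nondegenerate invariant subspace other than `⊥` and `⊤`. -/
def Indecomp (n : ℕ) (h : LieSubalgebra ℝ (Module.End ℝ (Vm n))) : Prop :=
  ∀ W : Submodule ℝ (Vm n),
    (∀ X ∈ h, ∀ w ∈ W, X w ∈ W) →
    (∀ w ∈ W, (∀ w' ∈ W, wB n w w' = 0) → w = 0) →
    W = ⊥ ∨ W = ⊤

/-!
A proper nonzero invariant subspace `W` cannot be nondegenerate, so its radical `W ∩ W^⊥` is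
nonzero; skew-symmetry makes the radical invariant as well. It is totally isotropic, and in
Lorentzian signature a totally isotropic subspace is at most a line, so any nonzero radical
vector spans an invariant null line.
-/

lemma wB_sub_smul_self (n : ℕ) (w u : Vm n) (c : ℝ) :
    wB n (w - c • u) (w - c • u) = wB n w w - 2 * c * wB n u w + c ^ 2 * wB n u u := by
  have hsum (f g : Fin n → ℝ) : ∑ i, (f i - c * g i) * (f i - c * g i)
      = ∑ i, f i * f i - 2 * c * ∑ i, g i * f i + c ^ 2 * ∑ i, g i * g i := by
    rw [Finset.mul_sum, Finset.mul_sum, ← Finset.sum_sub_distrib, ← Finset.sum_add_distrib]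
    exact Finset.sum_congr rfl fun i _ => by ring
  simp only [wB, Pi.sub_apply, Pi.smul_apply, smul_eq_mul, hsum]
  ring

lemma zero_midIx_lastIx_cases {n : ℕ} {P : Fin (n + 2) → Prop} (h0 : P 0)
    (hmid : ∀ i, P (midIx n i)) (hlast : P (lastIx n)) (j : Fin (n + 2)) : P j := by
  induction j using Fin.lastCases with
  | last => exact hlast
  | cast k =>
    induction k using Fin.cases with
    | zero => exact h0
    | succ i => exact hmid i

/-- On the hyperplane `u 0 = u (lastIx n)`, orthogonal to the timelike vector `e₋ - e₊`, the
form is `2 (u 0)² + ∑ (u (midIx n i))²`, which is positive definite. -/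
lemma eq_zero_of_wB_self_eq_zero_of_apply_zero_eq {n : ℕ} {u : Vm n} (hu : wB n u u = 0)
    (h : u 0 = u (lastIx n)) : u = 0 := by
  have hnonneg : ∀ i : Fin n, 0 ≤ u (midIx n i) * u (midIx n i) := fun i => mul_self_nonneg _
  have hsum_nonneg := Finset.sum_nonneg fun i (_ : i ∈ Finset.univ) => hnonneg i
  rw [wB, ← h] at hu
  have h0 : u 0 = 0 := mul_self_eq_zero.mp (by nlinarith)
  have hsum : ∑ i, u (midIx n i) * u (midIx n i) = 0 := by nlinarith
  have hmid : ∀ i, u (midIx n i) = 0 := fun i =>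
    mul_self_eq_zero.mp ((Finset.sum_eq_zero_iff_of_nonneg fun i _ => hnonneg i).1 hsum i
      (Finset.mem_univ i))
  funext j
  exact zero_midIx_lastIx_cases (P := fun j => u j = 0) h0 hmid (h ▸ h0) j

/-- Subtracting the multiple of `u` with the same `e₋ - e₊` component from `w` leaves a null
vector to which `eq_zero_of_wB_self_eq_zero_of_apply_zero_eq` applies. -/
lemma exists_eq_smul_of_wB_eq_zero {n : ℕ} {u w : Vm n} (hu : wB n u u = 0)
    (hw : wB n w w = 0) (huw : wB n u w = 0) (hu0 : u ≠ 0) : ∃ c : ℝ, w = c • u := by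
  have ht : u 0 - u (lastIx n) ≠ 0 := fun h0 =>
    hu0 (eq_zero_of_wB_self_eq_zero_of_apply_zero_eq hu (sub_eq_zero.mp h0))
  set c := (w 0 - w (lastIx n)) / (u 0 - u (lastIx n))
  have hc : c * (u 0 - u (lastIx n)) = w 0 - w (lastIx n) := div_mul_cancel₀ _ ht
  refine ⟨c, sub_eq_zero.mp (eq_zero_of_wB_self_eq_zero_of_apply_zero_eq ?_ ?_)⟩
  · rw [wB_sub_smul_self, hu, hw, huw]
    ring
  · simp only [Pi.sub_apply, Pi.smul_apply, smul_eq_mul]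
    linarith

lemma Indecomp.exists_ne_zero_forall_wB_eq_zero {n : ℕ}
    {h : LieSubalgebra ℝ (Module.End ℝ (Vm n))} (hind : Indecomp n h) {W : Submodule ℝ (Vm n)}
    (hinv : ∀ X ∈ h, ∀ w ∈ W, X w ∈ W) (hbot : W ≠ ⊥) (htop : W ≠ ⊤) :
    ∃ v ∈ W, v ≠ 0 ∧ ∀ w ∈ W, wB n v w = 0 := by
  by_contra hnondeg
  exact (hind W hinv fun v hv hrad => by_contra fun hv0 => hnondeg ⟨v, hv, hv0, hrad⟩).elim
    hbot htop

lemma IsSkewB.forall_wB_apply_eq_zero {n : ℕ} {X : Module.End ℝ (Vm n)} (hX : IsSkewB n X)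
    {W : Set (Vm n)} (hinv : ∀ w ∈ W, X w ∈ W) {v : Vm n} (hv : ∀ w ∈ W, wB n v w = 0) :
    ∀ w ∈ W, wB n (X v) w = 0 := fun w hw => by
  linarith [hX v w, hv (X w) (hinv w hw)]

theorem stmt1_general (n : ℕ) (h : LieSubalgebra ℝ (Module.End ℝ (Vm n)))
    (hskew : ∀ X ∈ h, IsSkewB n X)
    (hind : Indecomp n h)
    (hnonirr : ∃ W : Submodule ℝ (Vm n),
      (∀ X ∈ h, ∀ w ∈ W, X w ∈ W) ∧ W ≠ ⊥ ∧ W ≠ ⊤) :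
    ∃ v : Vm n, v ≠ 0 ∧ wB n v v = 0 ∧ ∀ X ∈ h, X v ∈ Submodule.span ℝ {v} := by
  obtain ⟨W, hinv, hbot, htop⟩ := hnonirr
  obtain ⟨v, hvW, hv0, hvrad⟩ := hind.exists_ne_zero_forall_wB_eq_zero hinv hbot htop
  refine ⟨v, hv0, hvrad v hvW, fun X hX => ?_⟩
  have hXvW : X v ∈ W := hinv X hX v hvW
  have hXvrad := (hskew X hX).forall_wB_apply_eq_zero (hinv X hX) hvrad
  obtain ⟨c, hc⟩ :=
    exists_eq_smul_of_wB_eq_zero (hvrad v hvW) (hXvrad _ hXvW) (hvrad _ hXvW) hv0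
  exact Submodule.mem_span_singleton.mpr ⟨c, hc.symm⟩

/-- An indecomposable, non-irreducible subalgebra `𝔥 ⊆ so(1,n+1)` (`n ≥ 1`)
preserves a null line of `ℝ^{1,n+1}`, i.e. it is conjugate to a subalgebra of the parabolic
`𝔭 = stab(ℝ·e₋)`. -/
theorem stmt1 (n : ℕ) (hn : 1 ≤ n) (h : LieSubalgebra ℝ (Module.End ℝ (Vm n)))
    (hskew : ∀ X ∈ h, IsSkewB n X)
    (hind : Indecomp n h)
    (hnonirr : ∃ W : Submodule ℝ (Vm n),
      (∀ X ∈ h, ∀ w ∈ W, X w ∈ W) ∧ W ≠ ⊥ ∧ W ≠ ⊤) :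
    ∃ v : Vm n, v ≠ 0 ∧ wB n v v = 0 ∧ ∀ X ∈ h, X v ∈ Submodule.span ℝ {v} :=
  stmt1_general n h hskew hind hnonirr
end

section
/- Let h be an indecomposable subalgebra of p ⊂ so(1,n+1) (n ≥ 1) and z_g(h) its centralizer in g = so(1,n+1). If the ℝ-component π_ℝ(h) of the projection of h to g_0 ≅ ℝ ⊕ so(n) is nonzero, then z_g(h) = {0}. Otherwise z_g(h) = { z̄ ∈ g_- : π_0(h)·z = 0 }, i.e. the centralizer consists of those elements of g_- ≅ ℝ^n annihilated by the g_0-projection of h; in particular z_g(h) ⊆ g_-. -/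
open scoped BigOperators

attribute [local instance] LieRing.ofAssociativeRing

/-!
Every subspace built canonically from an element `Z` of the centralizer is `𝔥`-invariant, so by
indecomposability it is `⊥` or `⊤` once it is nondegenerate. Applied to the line `ℝ · Z e₋` this
gives `Z e₋ = a e₋`; applied to the Fitting component `ker (Z² - a²)ᵏ`, which contains `e₋`, it
makes `Z² - a²` nilpotent. Being self-adjoint, `Z² - a²` then vanishes on the Euclidean quotient
`e₋^⊥ / ℝ e₋`, and `⟨(Z² - a²) v, v⟩ = -|Z v|² - a² |v|²` forces `a = 0` and `Z (e₋^⊥) ⊆ ℝ e₋`,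
i.e. `Z = z̄ ∈ 𝔤₋`. Finally `[X, z̄] = (π₀(X) z)‾` for `X ∈ 𝔭`, and
`⟨π₀(X) z, z⟩ = π_ℝ(X) |z|²` because the `so(n)`-part of `π₀(X)` is skew.
-/

variable {n : ℕ}

lemma lastIx_ne_zero : lastIx n ≠ 0 := by simp [lastIx, Fin.ext_iff]

lemma midIx_ne_zero (i : Fin n) : midIx n i ≠ 0 := by simp [midIx, Fin.ext_iff]

lemma midIx_ne_lastIx (i : Fin n) : midIx n i ≠ lastIx n := by
  simp only [midIx, lastIx, ne_eq, Fin.ext_iff, Fin.val_last]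
  omega

lemma midIx_injective : Function.Injective (midIx n) := fun i j h => by
  simpa [midIx, Fin.ext_iff] using h

lemma Fin.eq_zero_or_eq_lastIx_or_exists_eq_midIx (p : Fin (n + 2)) :
    p = 0 ∨ p = lastIx n ∨ ∃ i, p = midIx n i := by
  obtain ⟨v, hv⟩ := p
  rcases Nat.eq_zero_or_pos v with rfl | h0
  · exact Or.inl rfl
  by_cases hl : v = n + 1
  · exact Or.inr (Or.inl (Fin.ext hl))
  · exact Or.inr (Or.inr ⟨⟨v - 1, by omega⟩, Fin.ext (by simp [midIx]; omega)⟩)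

lemma Vm.ext {u v : Vm n} (h0 : u 0 = v 0) (hl : u (lastIx n) = v (lastIx n))
    (hm : ∀ i, u (midIx n i) = v (midIx n i)) : u = v := by
  funext p
  rcases Fin.eq_zero_or_eq_lastIx_or_exists_eq_midIx p with rfl | rfl | ⟨i, rfl⟩
  exacts [h0, hl, hm i]

lemma Vm.linearMap_ext {Y Y' : Module.End ℝ (Vm n)} (hm : Y (eMinus n) = Y' (eMinus n))
    (hp : Y (ePlus n) = Y' (ePlus n)) (hi : ∀ i, Y (eMid n i) = Y' (eMid n i)) : Y = Y' := by
  refine Module.Basis.ext (Pi.basisFun ℝ _) fun p => ?_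
  rw [Pi.basisFun_apply]
  rcases Fin.eq_zero_or_eq_lastIx_or_exists_eq_midIx p with rfl | rfl | ⟨i, rfl⟩
  exacts [hm, hp, hi i]

@[simp] lemma eMinus_apply_zero : eMinus n 0 = 1 := Pi.single_eq_same _ _
@[simp] lemma eMinus_apply_lastIx : eMinus n (lastIx n) = 0 :=
  Pi.single_eq_of_ne lastIx_ne_zero _
@[simp] lemma eMinus_apply_midIx (i : Fin n) : eMinus n (midIx n i) = 0 :=
  Pi.single_eq_of_ne (midIx_ne_zero i) _
@[simp] lemma ePlus_apply_zero : ePlus n 0 = 0 := Pi.single_eq_of_ne lastIx_ne_zero.symm _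
@[simp] lemma ePlus_apply_lastIx : ePlus n (lastIx n) = 1 := Pi.single_eq_same _ _
@[simp] lemma ePlus_apply_midIx (i : Fin n) : ePlus n (midIx n i) = 0 :=
  Pi.single_eq_of_ne (midIx_ne_lastIx i) _
@[simp] lemma eMid_apply_zero (i : Fin n) : eMid n i 0 = 0 :=
  Pi.single_eq_of_ne (midIx_ne_zero i).symm _
@[simp] lemma eMid_apply_lastIx (i : Fin n) : eMid n i (lastIx n) = 0 :=
  Pi.single_eq_of_ne (midIx_ne_lastIx i).symm _
@[simp] lemma eMid_apply_midIx (i j : Fin n) :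
    eMid n i (midIx n j) = if j = i then 1 else 0 := by
  simp [eMid, Pi.single_apply, midIx_injective.eq_iff]

@[simp] lemma vmid_apply_zero (c : Fin n → ℝ) : vmid n c 0 = 0 := by simp [vmid]
@[simp] lemma vmid_apply_lastIx (c : Fin n → ℝ) : vmid n c (lastIx n) = 0 := by simp [vmid]
@[simp] lemma vmid_apply_midIx (c : Fin n → ℝ) (j : Fin n) : vmid n c (midIx n j) = c j := by
  simp [vmid]

lemma wB_comm (u v : Vm n) : wB n u v = wB n v u := by
  simp only [wB, mul_comm (u _)]
  ring

lemma wB_add_right (u v v' : Vm n) : wB n u (v + v') = wB n u v + wB n u v' := by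
  simp only [wB, Pi.add_apply, mul_add, Finset.sum_add_distrib]
  ring

lemma wB_smul_right (t : ℝ) (u v : Vm n) : wB n u (t • v) = t * wB n u v := by
  simp only [wB, Pi.smul_apply, smul_eq_mul, mul_add, Finset.mul_sum]
  ring_nf

lemma wB_smul_left (t : ℝ) (u v : Vm n) : wB n (t • u) v = t * wB n u v := by
  rw [wB_comm, wB_smul_right, wB_comm]

lemma wB_sub_left (u u' v : Vm n) : wB n (u - u') v = wB n u v - wB n u' v := by
  simp only [wB, Pi.sub_apply, sub_mul, Finset.sum_sub_distrib]
  ring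

lemma wB_sub_right (u v v' : Vm n) : wB n u (v - v') = wB n u v - wB n u v' := by
  rw [wB_comm, wB_sub_left, wB_comm v, wB_comm v']

lemma wB_zero_left (v : Vm n) : wB n 0 v = 0 := by simp [wB]

lemma wB_zero_right (v : Vm n) : wB n v 0 = 0 := by simp [wB]

@[simp] lemma wB_eMinus_right (v : Vm n) : wB n v (eMinus n) = v (lastIx n) := by simp [wB]
@[simp] lemma wB_ePlus_right (v : Vm n) : wB n v (ePlus n) = v 0 := by simp [wB]
@[simp] lemma wB_eMid_right (v : Vm n) (i : Fin n) : wB n v (eMid n i) = v (midIx n i) := by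
  simp [wB]
@[simp] lemma wB_eMinus_left (v : Vm n) : wB n (eMinus n) v = v (lastIx n) := by
  rw [wB_comm, wB_eMinus_right]
@[simp] lemma wB_ePlus_left (v : Vm n) : wB n (ePlus n) v = v 0 := by
  rw [wB_comm, wB_ePlus_right]
@[simp] lemma wB_eMid_left (v : Vm n) (i : Fin n) : wB n (eMid n i) v = v (midIx n i) := by
  rw [wB_comm, wB_eMid_right]

lemma eq_zero_of_forall_wB_eq_zero {v : Vm n} (h : ∀ y, wB n v y = 0) : v = 0 :=
  Vm.ext (by simpa using h (ePlus n)) (by simpa using h (eMinus n))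
    fun i => by simpa using h (eMid n i)

lemma wB_self_of_apply_lastIx_eq_zero {v : Vm n} (hv : v (lastIx n) = 0) :
    wB n v v = ∑ i, v (midIx n i) ^ 2 := by
  simp [wB, hv, sq]

lemma mem_span_eMinus_iff {v : Vm n} :
    v ∈ ℝ ∙ eMinus n ↔ v (lastIx n) = 0 ∧ ∀ i, v (midIx n i) = 0 := by
  refine ⟨fun hv => ?_, fun ⟨hl, hm⟩ => Submodule.mem_span_singleton.mpr ⟨v 0, ?_⟩⟩
  · obtain ⟨c, rfl⟩ := Submodule.mem_span_singleton.mp hv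
    simp
  · exact Vm.ext (by simp) (by simp [hl]) (by simp [hm])

lemma wB_eq_zero_of_mem_span_eMinus {v l : Vm n} (hv : v (lastIx n) = 0)
    (hl : l ∈ ℝ ∙ eMinus n) : wB n v l = 0 := by
  obtain ⟨c, rfl⟩ := Submodule.mem_span_singleton.mp hl
  simp [wB_smul_right, hv]

lemma wB_self_nonneg_of_apply_lastIx_eq_zero {v : Vm n} (hv : v (lastIx n) = 0) :
    0 ≤ wB n v v := by
  rw [wB_self_of_apply_lastIx_eq_zero hv]
  positivity

lemma mem_span_eMinus_of_wB_self_eq_zero {v : Vm n} (hv : v (lastIx n) = 0)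
    (h0 : wB n v v = 0) : v ∈ ℝ ∙ eMinus n := by
  rw [wB_self_of_apply_lastIx_eq_zero hv,
    Finset.sum_eq_zero_iff_of_nonneg fun i _ => sq_nonneg _] at h0
  exact mem_span_eMinus_iff.mpr ⟨hv, fun i => pow_eq_zero_iff two_ne_zero |>.mp (h0 i (by simp))⟩

lemma wB_nondegenerate_span_singleton {u : Vm n} (hu : wB n u u ≠ 0) :
    ∀ v ∈ ℝ ∙ u, (∀ v' ∈ ℝ ∙ u, wB n v v' = 0) → v = 0 := by
  intro v hv hperp
  obtain ⟨t, rfl⟩ := Submodule.mem_span_singleton.mp hv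
  have := hperp u (Submodule.mem_span_singleton_self u)
  rw [wB_smul_left] at this
  rw [(mul_eq_zero.mp this).resolve_right hu, zero_smul]

namespace IsSkewB

variable {Z : Module.End ℝ (Vm n)}

lemma wB_apply_left (hZ : IsSkewB n Z) (u v : Vm n) : wB n (Z u) v = -wB n u (Z v) :=
  eq_neg_of_add_eq_zero_left (hZ u v)

lemma wB_apply_self (hZ : IsSkewB n Z) (u : Vm n) : wB n (Z u) u = 0 := by
  have := hZ u u
  rw [wB_comm u] at this
  linarith

lemma apply_eMinus_lastIx (hZ : IsSkewB n Z) : Z (eMinus n) (lastIx n) = 0 := by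
  simpa using hZ.wB_apply_self (eMinus n)

lemma apply_ePlus_zero (hZ : IsSkewB n Z) : Z (ePlus n) 0 = 0 := by
  simpa using hZ.wB_apply_self (ePlus n)

lemma apply_ePlus_lastIx (hZ : IsSkewB n Z) : Z (ePlus n) (lastIx n) = -Z (eMinus n) 0 := by
  simpa using hZ.wB_apply_left (ePlus n) (eMinus n)

lemma apply_eMid_zero (hZ : IsSkewB n Z) (i : Fin n) :
    Z (eMid n i) 0 = -Z (ePlus n) (midIx n i) := by
  simpa using hZ.wB_apply_left (eMid n i) (ePlus n)

lemma apply_eMid_lastIx (hZ : IsSkewB n Z) (i : Fin n) :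
    Z (eMid n i) (lastIx n) = -Z (eMinus n) (midIx n i) := by
  simpa using hZ.wB_apply_left (eMid n i) (eMinus n)

lemma apply_eMid_midIx (hZ : IsSkewB n Z) (i j : Fin n) :
    Z (eMid n i) (midIx n j) = -Z (eMid n j) (midIx n i) := by
  simpa using hZ.wB_apply_left (eMid n i) (eMid n j)

lemma apply_lastIx_of_apply_eMinus (hZ : IsSkewB n Z) {a : ℝ} (ha : Z (eMinus n) = a • eMinus n)
    (v : Vm n) : Z v (lastIx n) = -a * v (lastIx n) := by
  rw [← wB_eMinus_right (Z v), hZ.wB_apply_left, ha, wB_smul_right, wB_eMinus_right, neg_mul]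

lemma wB_mul_self_apply (hZ : IsSkewB n Z) (u v : Vm n) :
    wB n ((Z * Z) u) v = wB n u ((Z * Z) v) := by
  simp only [Module.End.mul_apply, hZ.wB_apply_left, neg_neg]

end IsSkewB

lemma barE_apply (w : Fin n → ℝ) (x : Vm n) :
    barE n w x = x (lastIx n) • vmid n w - (∑ i, w i * x (midIx n i)) • eMinus n := by
  simp [barE]

@[simp] lemma barE_apply_eMinus (w : Fin n → ℝ) : barE n w (eMinus n) = 0 := by
  simp [barE_apply]

@[simp] lemma barE_apply_ePlus (w : Fin n → ℝ) : barE n w (ePlus n) = vmid n w := by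
  simp [barE_apply]

@[simp] lemma barE_apply_eMid (w : Fin n → ℝ) (i : Fin n) :
    barE n w (eMid n i) = -w i • eMinus n := by
  simp [barE_apply]

@[simp] lemma barE_zero : barE n 0 = 0 := by
  refine LinearMap.ext fun x => ?_
  simp [barE_apply, vmid]

lemma barE_injective : Function.Injective (barE n) := fun v w h => by
  funext i
  simpa using congrFun (congrArg (· (ePlus n)) h) (midIx n i)

lemma isSkewB_barE (w : Fin n → ℝ) : IsSkewB n (barE n w) := by
  intro u v
  simp only [barE_apply, wB_sub_left, wB_smul_left, wB_comm u, wB_eMinus_left]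
  simp only [wB, vmid_apply_zero, vmid_apply_lastIx, vmid_apply_midIx]
  ring

lemma IsSkewB.eq_barE {Z : Module.End ℝ (Vm n)} (hZ : IsSkewB n Z) (hm : Z (eMinus n) = 0)
    (hmid : ∀ i j, Z (eMid n i) (midIx n j) = 0) :
    Z = barE n (fun i => Z (ePlus n) (midIx n i)) := by
  refine Vm.linearMap_ext (by simp [hm]) ?_ fun i => ?_
  · refine Vm.ext ?_ ?_ fun j => ?_ <;> simp [hZ.apply_ePlus_zero, hZ.apply_ePlus_lastIx, hm]
  · refine Vm.ext ?_ ?_ fun j => ?_ <;> simp [hZ.apply_eMid_zero, hZ.apply_eMid_lastIx, hm, hmid]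

lemma MemP.apply_eMinus {X : Module.End ℝ (Vm n)} (hX : MemP n X) :
    X (eMinus n) = piR n X • eMinus n := by
  obtain ⟨c, hc⟩ := Submodule.mem_span_singleton.mp hX.2
  rw [← hc, piR, ← hc]
  simp

lemma apply_vmid (X : Module.End ℝ (Vm n)) (c : Fin n → ℝ) :
    X (vmid n c) = ∑ i, c i • X (eMid n i) := by
  simp [vmid]

lemma MemP.mul_barE_sub_barE_mul {X : Module.End ℝ (Vm n)} (hX : MemP n X) (w : Fin n → ℝ) :
    X * barE n w - barE n w * X = barE n (pi0Act n X w) := by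
  have hXe := hX.apply_eMinus
  have hXs := hX.1
  refine Vm.linearMap_ext ?_ ?_ fun i => ?_
  · simp [hXe]
  · refine Vm.ext ?_ ?_ fun j => ?_
    · simp [apply_vmid, barE_apply, hXs.apply_eMid_zero]
    · simp [apply_vmid, barE_apply, hXs.apply_eMid_lastIx, hXe]
    · simp [apply_vmid, barE_apply, hXs.apply_ePlus_lastIx, hXe, pi0Act, mul_comm (w _)]
      ring
  · refine Vm.ext ?_ ?_ fun j => ?_
    · simp [barE_apply, hXs.apply_eMid_lastIx, hXe, pi0Act, hXs.apply_eMid_midIx i,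
        mul_comm (w _)]
      ring
    · simp [barE_apply, hXs.apply_eMid_lastIx, hXe]
    · simp [barE_apply, hXs.apply_eMid_lastIx, hXe]

lemma MemP.barE_mul_eq_mul_barE_iff {X : Module.End ℝ (Vm n)} (hX : MemP n X)
    (w : Fin n → ℝ) : barE n w * X = X * barE n w ↔ pi0Act n X w = 0 := by
  rw [eq_comm, ← sub_eq_zero, hX.mul_barE_sub_barE_mul, barE_injective.eq_iff' barE_zero]

lemma IsSkewB.sum_pi0Act_mul_self {X : Module.End ℝ (Vm n)} (hX : IsSkewB n X)
    (c : Fin n → ℝ) : ∑ j, pi0Act n X c j * c j = piR n X * ∑ j, c j ^ 2 := by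
  have hS : ∑ j, ∑ i, X (eMid n i) (midIx n j) * c i * c j
      = -∑ j, ∑ i, X (eMid n i) (midIx n j) * c i * c j := by
    conv_lhs => rw [Finset.sum_comm]
    simp only [← Finset.sum_neg_distrib]
    refine Finset.sum_congr rfl fun j _ => Finset.sum_congr rfl fun i _ => ?_
    rw [hX.apply_eMid_midIx]
    ring
  simp only [pi0Act, wB_eMid_right, add_mul, Finset.sum_add_distrib, Finset.sum_mul,
    Finset.mul_sum]
  ring_nf
  linarith

lemma IsSkewB.eq_zero_of_pi0Act_eq_zero {X : Module.End ℝ (Vm n)} (hX : IsSkewB n X)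
    (hX0 : piR n X ≠ 0) {c : Fin n → ℝ} (hc : pi0Act n X c = 0) : c = 0 := by
  have h := hX.sum_pi0Act_mul_self c
  simp only [hc, Pi.zero_apply, zero_mul, Finset.sum_const_zero, zero_eq_mul, hX0, false_or] at h
  funext j
  exact pow_eq_zero_iff two_ne_zero |>.mp <|
    (Finset.sum_eq_zero_iff_of_nonneg fun i _ => sq_nonneg (c i)).mp h j (Finset.mem_univ j)

section SelfAdjoint

variable {T : Module.End ℝ (Vm n)}

lemma wB_pow_apply_left (hT : ∀ u v, wB n (T u) v = wB n u (T v)) (k : ℕ) (u v : Vm n) :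
    wB n ((T ^ k) u) v = wB n u ((T ^ k) v) := by
  induction k generalizing u v with
  | zero => rfl
  | succ k ih =>
    calc wB n ((T ^ (k + 1)) u) v = wB n ((T ^ k) (T u)) v := by rw [pow_succ, Module.End.mul_apply]
      _ = wB n u (T ((T ^ k) v)) := by rw [ih, hT]
      _ = wB n u ((T ^ (k + 1)) v) := by rw [pow_succ', Module.End.mul_apply]

/-- Fitting decomposition: `range (T ^ k)` is orthogonal to `ker (T ^ k)` and complements it. -/
lemma wB_nondegenerate_ker_pow (hT : ∀ u v, wB n (T u) v = wB n u (T v)) {k : ℕ}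
    (hk : IsCompl (LinearMap.ker (T ^ k)) (LinearMap.range (T ^ k))) :
    ∀ v ∈ LinearMap.ker (T ^ k), (∀ v' ∈ LinearMap.ker (T ^ k), wB n v v' = 0) → v = 0 := by
  intro v hv hperp
  refine eq_zero_of_forall_wB_eq_zero fun y => ?_
  have hy : y ∈ LinearMap.ker (T ^ k) ⊔ LinearMap.range (T ^ k) := by simp [hk.sup_eq_top]
  obtain ⟨x, hx, _, ⟨s, rfl⟩, rfl⟩ := Submodule.mem_sup.mp hy
  rw [wB_add_right, hperp x hx, ← wB_pow_apply_left hT, LinearMap.mem_ker.mp hv, wB_zero_left,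
    add_zero]

/-- `T` descends to a nilpotent self-adjoint map of the Euclidean space `e₋^⊥ / ℝ e₋`, which must
vanish. -/
lemma apply_mem_span_eMinus_of_isNilpotent (hT : ∀ u v, wB n (T u) v = wB n u (T v))
    (hTe : T (eMinus n) = 0) (hnil : IsNilpotent T) {v : Vm n} (hv : v (lastIx n) = 0) :
    T v ∈ ℝ ∙ eMinus n := by
  let P : ℕ → Prop := fun k => ∀ v : Vm n, v (lastIx n) = 0 → (T ^ (k + 1)) v ∈ ℝ ∙ eMinus n
  have hL : ∀ j, ∀ l ∈ ℝ ∙ eMinus n, (T ^ j) l ∈ ℝ ∙ eMinus n := by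
    intro j l hl
    obtain ⟨c, rfl⟩ := Submodule.mem_span_singleton.mp hl
    cases j with
    | zero => simpa using hl
    | succ j => simp [pow_succ, hTe]
  have step : ∀ k, P (k + 1) → P k := by
    intro k hk v hv
    have hlast : (T ^ (k + 1)) v (lastIx n) = 0 := by
      rw [← wB_eMinus_right ((T ^ (k + 1)) v), wB_pow_apply_left hT, pow_succ,
        Module.End.mul_apply, hTe, map_zero, wB_zero_right]
    refine mem_span_eMinus_of_wB_self_eq_zero hlast ?_
    rw [wB_pow_apply_left hT, ← Module.End.mul_apply, ← pow_add,
      show k + 1 + (k + 1) = k + (k + 2) by ring, pow_add, Module.End.mul_apply]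
    exact wB_eq_zero_of_mem_span_eMinus hv (hL k _ (hk v hv))
  have down : ∀ j k, P (k + j) → P k := by
    intro j
    induction j with
    | zero => exact fun k => id
    | succ j ih =>
      exact fun k hk => step k (ih (k + 1) (by rwa [show k + 1 + j = k + (j + 1) by omega]))
  obtain ⟨m, hm⟩ := hnil
  simpa using down m 0 (fun v _ => by simp [pow_succ, hm]) v hv

end SelfAdjoint

section Centralizer

variable {h : LieSubalgebra ℝ (Module.End ℝ (Vm n))} {Z : Module.End ℝ (Vm n)}

/-- If `Z e₋` had a nonzero `ℝⁿ`-component it would span a nondegenerate `𝔥`-invariant line. -/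
lemma apply_eMinus_eq_smul_of_commute (hp : ∀ X ∈ h, MemP n X) (hind : Indecomp n h)
    (hZ : IsSkewB n Z) (hZh : ∀ X ∈ h, Z * X = X * Z) :
    Z (eMinus n) = Z (eMinus n) 0 • eMinus n := by
  set u := Z (eMinus n)
  have hu : u (lastIx n) = 0 := hZ.apply_eMinus_lastIx
  suffices hmid : ∀ i, u (midIx n i) = 0 from Vm.ext (by simp) (by simp [hu]) (by simp [hmid])
  by_contra! ⟨i₀, hi₀⟩
  have hpos : 0 < wB n u u := by
    rw [wB_self_of_apply_lastIx_eq_zero hu]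
    exact Finset.sum_pos' (fun i _ => sq_nonneg _) ⟨i₀, Finset.mem_univ _, by positivity⟩
  have hinv : ∀ X ∈ h, ∀ v ∈ ℝ ∙ u, X v ∈ ℝ ∙ u := by
    intro X hX v hv
    obtain ⟨t, rfl⟩ := Submodule.mem_span_singleton.mp hv
    have hXu : X u = piR n X • u := by
      rw [← Module.End.mul_apply, ← hZh X hX, Module.End.mul_apply, (hp X hX).apply_eMinus,
        map_smul]
    rw [map_smul, hXu, smul_smul]
    exact Submodule.smul_mem _ _ (Submodule.mem_span_singleton_self u)
  have hne : ℝ ∙ u ≠ ⊥ := fun hbot =>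
    hpos.ne' (by rw [Submodule.span_singleton_eq_bot.mp hbot, wB_zero_left])
  have htop := (hind _ hinv (wB_nondegenerate_span_singleton hpos.ne')).resolve_left hne
  obtain ⟨t, ht⟩ := Submodule.mem_span_singleton.mp (htop ▸ Submodule.mem_top : ePlus n ∈ ℝ ∙ u)
  simpa [hu] using congrFun ht (lastIx n)

lemma isNilpotent_of_commute (hind : Indecomp n h) {T : Module.End ℝ (Vm n)}
    (hT : ∀ u v, wB n (T u) v = wB n u (T v)) (hTh : ∀ X ∈ h, T * X = X * T)
    (hTe : T (eMinus n) = 0) : IsNilpotent T := by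
  obtain ⟨k, hk, hk1⟩ :=
    (T.eventually_isCompl_ker_pow_range_pow.and (Filter.eventually_ge_atTop 1)).exists
  have hinv : ∀ X ∈ h, ∀ v ∈ LinearMap.ker (T ^ k), X v ∈ LinearMap.ker (T ^ k) := by
    intro X hX v hv
    rw [LinearMap.mem_ker, ← Module.End.mul_apply, (Commute.pow_left (hTh X hX) k).eq,
      Module.End.mul_apply, LinearMap.mem_ker.mp hv, map_zero]
  have hne : LinearMap.ker (T ^ k) ≠ ⊥ := by
    obtain ⟨m, rfl⟩ := Nat.exists_eq_add_of_le' hk1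
    rw [Submodule.ne_bot_iff]
    exact ⟨eMinus n, by simp [pow_succ, hTe], fun h0 => by simpa using congrFun h0 0⟩
  exact ⟨k, LinearMap.ker_eq_top.mp
    ((hind _ hinv (wB_nondegenerate_ker_pow hT hk)).resolve_left hne)⟩

lemma eq_barE_of_commute (hn : 1 ≤ n) (hp : ∀ X ∈ h, MemP n X) (hind : Indecomp n h)
    (hZ : IsSkewB n Z) (hZh : ∀ X ∈ h, Z * X = X * Z) : ∃ w, Z = barE n w := by
  set a := Z (eMinus n) 0
  have hZe : Z (eMinus n) = a • eMinus n := apply_eMinus_eq_smul_of_commute hp hind hZ hZh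
  set T := Z * Z - a ^ 2 • 1
  have hT : ∀ u v, wB n (T u) v = wB n u (T v) := fun u v => by
    simp only [T, LinearMap.sub_apply, LinearMap.smul_apply, Module.End.one_apply, wB_sub_left,
      wB_sub_right, wB_smul_left, wB_smul_right, hZ.wB_mul_self_apply]
  have hTe : T (eMinus n) = 0 := by simp [T, hZe, smul_smul, sq]
  have hTh : ∀ X ∈ h, T * X = X * T := fun X hX =>
    ((Commute.mul_left (hZh X hX) (hZh X hX)).sub_left ((Commute.one_left X).smul_left _)).eq
  have hnil := isNilpotent_of_commute hind hT hTh hTe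
  -- `⟨T v, v⟩ = -⟨Z v, Z v⟩ - a² ⟨v, v⟩` is a sum of two nonpositive terms on `e₋^⊥`.
  have hsum : ∀ v, v (lastIx n) = 0 → wB n (Z v) (Z v) = 0 ∧ a ^ 2 * wB n v v = 0 := by
    intro v hv
    have h0 := wB_eq_zero_of_mem_span_eMinus hv
      (apply_mem_span_eMinus_of_isNilpotent hT hTe hnil hv)
    simp only [T, LinearMap.sub_apply, LinearMap.smul_apply, Module.End.one_apply,
      Module.End.mul_apply, wB_sub_right, wB_smul_right] at h0
    rw [wB_comm v, hZ.wB_apply_left] at h0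
    have hZv := wB_self_nonneg_of_apply_lastIx_eq_zero
      ((hZ.apply_lastIx_of_apply_eMinus hZe v).trans (by rw [hv, mul_zero]))
    have hv' := mul_nonneg (sq_nonneg a) (wB_self_nonneg_of_apply_lastIx_eq_zero hv)
    constructor <;> linarith
  have ha : a = 0 := by
    simpa using (hsum (eMid n ⟨0, hn⟩) (by simp)).2
  refine ⟨_, hZ.eq_barE (by rw [hZe, ha, zero_smul]) fun i j => ?_⟩
  exact (mem_span_eMinus_iff.mp (mem_span_eMinus_of_wB_self_eq_zero
    (by simp [hZ.apply_eMid_lastIx, hZe]) (hsum (eMid n i) (by simp)).1)).2 j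

end Centralizer

/-- Let `𝔥 ⊆ 𝔭 ⊂ so(1,n+1)` (`n ≥ 1`) be indecomposable and let `z_𝔤(𝔥)` be
its centraliser in `𝔤 = so(1,n+1)`. If `π_ℝ(𝔥) ≠ 0` then `z_𝔤(𝔥) = {0}`; otherwise
`z_𝔤(𝔥) = { z̄ ∈ 𝔤₋ : π₀(𝔥)·z = 0 }` (in particular it is contained in `𝔤₋`). -/
theorem stmt3 (n : ℕ) (hn : 1 ≤ n) (h : LieSubalgebra ℝ (Module.End ℝ (Vm n)))
    (hp : ∀ X ∈ h, MemP n X)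
    (hind : Indecomp n h) :
    ((∃ X ∈ h, piR n X ≠ 0) →
      ∀ Z : Module.End ℝ (Vm n), IsSkewB n Z → (∀ X ∈ h, Z * X = X * Z) → Z = 0) ∧
    ((∀ X ∈ h, piR n X = 0) →
      ∀ Z : Module.End ℝ (Vm n),
        ((IsSkewB n Z ∧ ∀ X ∈ h, Z * X = X * Z) ↔
          (∃ z : Fin n → ℝ, Z = barE n z ∧ ∀ X ∈ h, pi0Act n X z = 0))) := by
  have hcent : ∀ Z, IsSkewB n Z → (∀ X ∈ h, Z * X = X * Z) →
      ∃ z, Z = barE n z ∧ ∀ X ∈ h, pi0Act n X z = 0 := by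
    intro Z hZ hZh
    obtain ⟨z, rfl⟩ := eq_barE_of_commute hn hp hind hZ hZh
    exact ⟨z, rfl, fun X hX => ((hp X hX).barE_mul_eq_mul_barE_iff z).mp (hZh X hX)⟩
  refine ⟨?_, fun _ Z => ⟨fun ⟨hZ, hZh⟩ => hcent Z hZ hZh, ?_⟩⟩
  · rintro ⟨X, hX, hX0⟩ Z hZ hZh
    obtain ⟨z, rfl, hz⟩ := hcent Z hZ hZh
    rw [(hp X hX).1.eq_zero_of_pi0Act_eq_zero hX0 (hz X hX), barE_zero]
  · rintro ⟨z, rfl, hz⟩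
    exact ⟨isSkewB_barE z, fun X hX => ((hp X hX).barE_mul_eq_mul_barE_iff z).mpr (hz X hX)⟩
end

section
/- Let ∇ and ∇̃ be two metric connections with ∇ torsion-free, ∇̃ with parallel torsion and parallel curvature (∇̃R̃ = 0, ∇̃T = 0). Then the curvature R of the Levi-Civita connection ∇ is ∇̃-parallel, and ∇_X R = S(X)·R for all X, where S is the difference tensor and S(X)·R denotes the action of the skew endomorphism S(X) as a derivation on the tensor R. -/
/-!
Write `∇ = ∇̃ + S`. Both connections are metric, so `S X` is `g`-skew, and since `∇` is
torsion-free the antisymmetrisation of `S` is `−T̃`. A skew tensor is determined by its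
antisymmetrisation (the contorsion formula), so `∇̃T̃ = 0` forces `∇̃S = 0`. Then
`R = R̃ + S(T̃(X,Y)) + [S X, S Y]`, each term being `∇̃`-parallel, and `∇_X R = ∇̃_X R + S(X)·R`.
-/

/-- The torsion `T(X,Y) = ∇_X Y − ∇_Y X − [X,Y]` of a connection. -/
def torsOf {VF : Type*} [LieRing VF] [LieAlgebra ℝ VF]
    (c : VF → VF → VF) (X Y : VF) : VF :=
  c X Y - c Y X - ⁅X, Y⁆

/-- The curvature of a connection. -/
def curvOf {VF : Type*} [LieRing VF] [LieAlgebra ℝ VF]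
    (c : VF → VF → VF) (X Y Z : VF) : VF :=
  c X (c Y Z) - c Y (c X Z) - c ⁅X, Y⁆ Z

/-- The covariant derivative `(∇_X β)(Y,Z)W` of a `(3,1)`-tensor `β` with respect to a
connection `c`. -/
def covD3 {VF : Type*} [LieRing VF] [LieAlgebra ℝ VF]
    (c : VF → VF → VF) (β : VF → VF → VF → VF) (X Y Z W : VF) : VF :=
  c X (β Y Z W) - β (c X Y) Z W - β Y (c X Z) W - β Y Z (c X W)

def covD2 {VF : Type*} [AddCommGroup VF] (c β : VF → VF → VF) (X Y Z : VF) : VF :=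
  c X (β Y Z) - β (c X Y) Z - β Y (c X Z)

theorem covD2_eq_zero_iff {VF : Type*} [AddCommGroup VF] {c β : VF → VF → VF} {X Y Z : VF} :
    covD2 c β X Y Z = 0 ↔ c X (β Y Z) = β (c X Y) Z + β Y (c X Z) := by
  rw [covD2, sub_sub, sub_eq_zero]

section Contorsion

variable {R VF A : Type*} [CommRing R] [AddCommGroup VF] [Module R VF] [AddCommGroup A]
  [Module R A] {g : VF →ₗ[R] VF →ₗ[R] A} {D : VF → A →ₗ[R] A}

theorem metric_sub_skew (hg : ∀ X Y, g X Y = g Y X) {c c' : VF → VF → VF}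
    (hc : ∀ X Y Z, D X (g Y Z) = g (c X Y) Z + g Y (c X Z))
    (hc' : ∀ X Y Z, D X (g Y Z) = g (c' X Y) Z + g Y (c' X Z)) (X Y Z : VF) :
    g (c' X Y - c X Y) Z + g (c' X Z - c X Z) Y = 0 := by
  rw [map_sub, map_sub, LinearMap.sub_apply, LinearMap.sub_apply, hg (c' X Z), hg (c X Z)]
  linear_combination (norm := abel) hc X Y Z - hc' X Y Z

theorem two_smul_eq_of_skew {S T : VF → VF → VF}
    (hS : ∀ X Y Z, g (S X Y) Z + g (S X Z) Y = 0)
    (hST : ∀ X Y, S X Y - S Y X = -T X Y) (X Y Z : VF) :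
    (2 : R) • g (S X Y) Z = g (T Y Z) X - g (T Z X) Y - g (T X Y) Z := by
  have hT : ∀ X Y, T X Y = S Y X - S X Y := fun X Y => by rw [← neg_sub, hST, neg_neg]
  simp only [hT, map_sub, LinearMap.sub_apply]
  linear_combination (norm := module) hS X Y Z + hS Y Z X - hS Z Y X

theorem covD2_eq_zero_of_skew (h2 : IsUnit (2 : R)) (hgnd : ∀ X, (∀ Z, g X Z = 0) → X = 0)
    {c S T : VF → VF → VF} (hc : ∀ X Y Z, D X (g Y Z) = g (c X Y) Z + g Y (c X Z))
    (hS : ∀ X Y Z, g (S X Y) Z + g (S X Z) Y = 0)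
    (hST : ∀ X Y, S X Y - S Y X = -T X Y) (hT : ∀ X Y Z, covD2 c T X Y Z = 0) (X Y Z : VF) :
    covD2 c S X Y Z = 0 := by
  have hDT : ∀ Y Z W, D X (g (T Y Z) W) =
      g (T (c X Y) Z) W + g (T Y (c X Z)) W + g (T Y Z) (c X W) := fun Y Z W => by
    rw [hc, covD2_eq_zero_iff.mp (hT X Y Z), map_add, LinearMap.add_apply]
  have hcontorsion := two_smul_eq_of_skew (R := R) hS hST
  refine hgnd _ fun W => h2.smul_left_cancel.mp ?_
  have hD := congrArg (D X) (hcontorsion Y Z W)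
  rw [map_smul, hc, map_sub, map_sub, hDT, hDT, hDT] at hD
  simp only [covD2, map_sub, LinearMap.sub_apply, smul_zero]
  linear_combination (norm := module) hD - hcontorsion (c X Y) Z W
    - hcontorsion Y (c X Z) W - hcontorsion Y Z (c X W)

end Contorsion

section Curvature

variable {VF : Type*} [LieRing VF] [LieAlgebra ℝ VF]

theorem sub_sub_swap_eq_torsOf_sub (c c' : VF → VF → VF) (X Y : VF) :
    (c' X Y - c X Y) - (c' Y X - c Y X) = torsOf c' X Y - torsOf c X Y := by
  simp only [torsOf]; abel

theorem curvOf_add_eq (c S : VF →ₗ[ℝ] VF →ₗ[ℝ] VF)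
    (hS : ∀ X Y Z, covD2 (fun u v => c u v) (fun u v => S u v) X Y Z = 0) (X Y Z : VF) :
    curvOf (fun u v => (c + S) u v) X Y Z = curvOf (fun u v => c u v) X Y Z
      + S (torsOf (fun u v => c u v) X Y) Z + (S X (S Y Z) - S Y (S X Z)) := by
  simp only [curvOf, torsOf, LinearMap.add_apply, map_add, map_sub, LinearMap.sub_apply,
    covD2_eq_zero_iff.mp (hS _ _ _)]
  abel

theorem covD3_add (c : VF →ₗ[ℝ] VF →ₗ[ℝ] VF) (β γ : VF → VF → VF → VF) (X Y Z W : VF) :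
    covD3 (fun u v => c u v) (β + γ) X Y Z W
      = covD3 (fun u v => c u v) β X Y Z W + covD3 (fun u v => c u v) γ X Y Z W := by
  simp only [covD3, Pi.add_apply, map_add]; abel

theorem covD3_comp_eq_zero {c S : VF →ₗ[ℝ] VF →ₗ[ℝ] VF} {T : VF → VF → VF}
    (hS : ∀ X Y Z, covD2 (fun u v => c u v) (fun u v => S u v) X Y Z = 0)
    (hT : ∀ X Y Z, covD2 (fun u v => c u v) T X Y Z = 0) (X Y Z W : VF) :
    covD3 (fun u v => c u v) (fun Y Z W => S (T Y Z) W) X Y Z W = 0 := by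
  simp only [covD3, covD2_eq_zero_iff.mp (hS _ _ _), covD2_eq_zero_iff.mp (hT _ _ _), map_add,
    LinearMap.add_apply]
  abel

theorem covD3_commutator_eq_zero {c S : VF →ₗ[ℝ] VF →ₗ[ℝ] VF}
    (hS : ∀ X Y Z, covD2 (fun u v => c u v) (fun u v => S u v) X Y Z = 0) (X Y Z W : VF) :
    covD3 (fun u v => c u v) (fun Y Z W => S Y (S Z W) - S Z (S Y W)) X Y Z W = 0 := by
  simp only [covD3, map_sub, covD2_eq_zero_iff.mp (hS _ _ _), map_add]
  abel

theorem covD3_curvOf_add_eq_zero {c S : VF →ₗ[ℝ] VF →ₗ[ℝ] VF}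
    (hR : ∀ X Y Z W, covD3 (fun u v => c u v) (curvOf (fun u v => c u v)) X Y Z W = 0)
    (hT : ∀ X Y Z, covD2 (fun u v => c u v) (torsOf (fun u v => c u v)) X Y Z = 0)
    (hS : ∀ X Y Z, covD2 (fun u v => c u v) (fun u v => S u v) X Y Z = 0) (X Y Z W : VF) :
    covD3 (fun u v => c u v) (curvOf (fun u v => (c + S) u v)) X Y Z W = 0 := by
  have hsplit : curvOf (fun u v => (c + S) u v) = curvOf (fun u v => c u v)
      + (fun Y Z W => S (torsOf (fun u v => c u v) Y Z) W)
      + (fun Y Z W => S Y (S Z W) - S Z (S Y W)) := by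
    ext Y Z W
    exact curvOf_add_eq c S hS Y Z W
  rw [hsplit, covD3_add, covD3_add, hR, covD3_comp_eq_zero hS hT,
    covD3_commutator_eq_zero hS, add_zero, add_zero]

theorem curvOf_sub_left (c : VF →ₗ[ℝ] VF →ₗ[ℝ] VF) (a b Z W : VF) :
    curvOf (fun u v => c u v) (a - b) Z W
      = curvOf (fun u v => c u v) a Z W - curvOf (fun u v => c u v) b Z W := by
  simp only [curvOf, map_sub, LinearMap.sub_apply, sub_lie]; abel

theorem curvOf_sub_middle (c : VF →ₗ[ℝ] VF →ₗ[ℝ] VF) (Y a b W : VF) :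
    curvOf (fun u v => c u v) Y (a - b) W
      = curvOf (fun u v => c u v) Y a W - curvOf (fun u v => c u v) Y b W := by
  simp only [curvOf, map_sub, LinearMap.sub_apply, lie_sub]; abel

theorem curvOf_sub_right (c : VF →ₗ[ℝ] VF →ₗ[ℝ] VF) (Y Z a b : VF) :
    curvOf (fun u v => c u v) Y Z (a - b)
      = curvOf (fun u v => c u v) Y Z a - curvOf (fun u v => c u v) Y Z b := by
  simp only [curvOf, map_sub]; abel

/-- The last term is the derivation action `S(X)·β` of the difference tensor `S = c' - c`. -/
theorem covD3_eq_add_covD3_sub (c c' : VF →ₗ[ℝ] VF →ₗ[ℝ] VF) {β : VF → VF → VF → VF}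
    (h₁ : ∀ a b Z W, β (a - b) Z W = β a Z W - β b Z W)
    (h₂ : ∀ Y a b W, β Y (a - b) W = β Y a W - β Y b W)
    (h₃ : ∀ Y Z a b, β Y Z (a - b) = β Y Z a - β Y Z b) (X Y Z W : VF) :
    covD3 (fun u v => c' u v) β X Y Z W
      = covD3 (fun u v => c u v) β X Y Z W + covD3 (fun u v => c' u v - c u v) β X Y Z W := by
  simp only [covD3, h₁, h₂, h₃]; abel

end Curvature

theorem stmt12_general {VF A : Type*} [LieRing VF] [LieAlgebra ℝ VF] [CommRing A] [Algebra ℝ A]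
    (D : VF →ₗ[ℝ] A →ₗ[ℝ] A)
    (g : VF →ₗ[ℝ] VF →ₗ[ℝ] A)
    (hgsym : ∀ X Y : VF, g X Y = g Y X)
    (hgnd : ∀ X : VF, (∀ Z : VF, g X Z = 0) → X = 0)
    (nb tn : VF →ₗ[ℝ] VF →ₗ[ℝ] VF)
    (hcomp : ∀ X Y Z : VF, D X (g Y Z) = g (nb X Y) Z + g Y (nb X Z))
    (hcompt : ∀ X Y Z : VF, D X (g Y Z) = g (tn X Y) Z + g Y (tn X Z))
    (htf : ∀ X Y : VF, torsOf (fun u v => nb u v) X Y = 0)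
    (hpt : ∀ X Y Z : VF,
      tn X (torsOf (fun u v => tn u v) Y Z)
        - torsOf (fun u v => tn u v) (tn X Y) Z
        - torsOf (fun u v => tn u v) Y (tn X Z) = 0)
    (hpr : ∀ X Y Z W : VF, covD3 (fun u v => tn u v) (curvOf (fun u v => tn u v)) X Y Z W = 0) :
    (∀ X Y Z W : VF, covD3 (fun u v => tn u v) (curvOf (fun u v => nb u v)) X Y Z W = 0) ∧
    (∀ X Y Z W : VF,
      covD3 (fun u v => nb u v) (curvOf (fun u v => nb u v)) X Y Z W
        = (nb X (curvOf (fun u v => nb u v) Y Z W) - tn X (curvOf (fun u v => nb u v) Y Z W))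
          - curvOf (fun u v => nb u v) (nb X Y - tn X Y) Z W
          - curvOf (fun u v => nb u v) Y (nb X Z - tn X Z) W
          - curvOf (fun u v => nb u v) Y Z (nb X W - tn X W)) := by
  have hS : ∀ X Y Z, covD2 (fun u v => tn u v) (fun u v => (nb - tn) u v) X Y Z = 0 := by
    refine covD2_eq_zero_of_skew two_ne_zero.isUnit hgnd hcompt
      (metric_sub_skew hgsym hcompt hcomp) (fun X Y => ?_) hpt
    simpa only [LinearMap.sub_apply, htf, zero_sub] using
      sub_sub_swap_eq_torsOf_sub (fun u v => tn u v) (fun u v => nb u v) X Y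
  have hpar : ∀ X Y Z W,
      covD3 (fun u v => tn u v) (curvOf (fun u v => nb u v)) X Y Z W = 0 := by
    simpa only [add_sub_cancel] using covD3_curvOf_add_eq_zero hpr hpt hS
  refine ⟨hpar, fun X Y Z W => ?_⟩
  rw [covD3_eq_add_covD3_sub tn nb (curvOf_sub_left nb) (curvOf_sub_middle nb)
    (curvOf_sub_right nb), hpar, zero_add]
  rfl

/-- Let `∇` and `∇̃` be metric connections, `∇` torsion-free (Levi-Civita)
and `∇̃` with parallel torsion and parallel curvature (`∇̃R̃ = 0`, `∇̃T = 0`).  Then the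
Levi-Civita curvature `R` is `∇̃`-parallel, and `∇_X R = S(X)·R`, where `S = ∇ − ∇̃` and
`S(X)·R` is the action of `S(X)` as a derivation on the tensor `R`. -/
theorem stmt12 {VF A : Type*} [LieRing VF] [LieAlgebra ℝ VF] [CommRing A] [Algebra ℝ A]
    (D : VF →ₗ[ℝ] A →ₗ[ℝ] A)
    (hD : ∀ (X : VF) (a b : A), D X (a * b) = a * D X b + D X a * b)
    (g : VF →ₗ[ℝ] VF →ₗ[ℝ] A)
    (hgsym : ∀ X Y : VF, g X Y = g Y X)
    (hgnd : ∀ X : VF, (∀ Z : VF, g X Z = 0) → X = 0)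
    (nb tn : VF →ₗ[ℝ] VF →ₗ[ℝ] VF)
    (hcomp : ∀ X Y Z : VF, D X (g Y Z) = g (nb X Y) Z + g Y (nb X Z))
    (hcompt : ∀ X Y Z : VF, D X (g Y Z) = g (tn X Y) Z + g Y (tn X Z))
    (htf : ∀ X Y : VF, torsOf (fun u v => nb u v) X Y = 0)
    (hpt : ∀ X Y Z : VF,
      tn X (torsOf (fun u v => tn u v) Y Z)
        - torsOf (fun u v => tn u v) (tn X Y) Z
        - torsOf (fun u v => tn u v) Y (tn X Z) = 0)
    (hpr : ∀ X Y Z W : VF, covD3 (fun u v => tn u v) (curvOf (fun u v => tn u v)) X Y Z W = 0) :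
    (∀ X Y Z W : VF, covD3 (fun u v => tn u v) (curvOf (fun u v => nb u v)) X Y Z W = 0) ∧
    (∀ X Y Z W : VF,
      covD3 (fun u v => nb u v) (curvOf (fun u v => nb u v)) X Y Z W
        = (nb X (curvOf (fun u v => nb u v) Y Z W) - tn X (curvOf (fun u v => nb u v) Y Z W))
          - curvOf (fun u v => nb u v) (nb X Y - tn X Y) Z W
          - curvOf (fun u v => nb u v) Y (nb X Z - tn X Z) W
          - curvOf (fun u v => nb u v) Y Z (nb X W - tn X W)) :=
  stmt12_general D g hgsym hgnd nb tn hcomp hcompt htf hpt hpr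
end

section
/- Let ∇̃ be a 2-symmetric metric connection (∇̃∇̃R̃ = 0) on a Lorentzian manifold (M,g) and ξ a ∇̃-recurrent vector field with ∇̃ξ = θ ⊗ ξ. Then ∇̃(dθ) is a ∇̃-parallel tensor field; if moreover ∇̃R̃ = 0, then dθ itself is ∇̃-parallel. -/
/-- The covariant derivative of an `A`-valued 2-tensor. -/
def covT2 {VF A : Type*} [LieRing VF] [LieAlgebra ℝ VF] [CommRing A] [Algebra ℝ A]
    (D : VF → A →ₗ[ℝ] A) (c : VF → VF → VF) (ω : VF → VF → A) (X Y Z : VF) : A :=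
  D X (ω Y Z) - ω (c X Y) Z - ω Y (c X Z)

/-- The covariant derivative of an `A`-valued 3-tensor. -/
def covT3 {VF A : Type*} [LieRing VF] [LieAlgebra ℝ VF] [CommRing A] [Algebra ℝ A]
    (D : VF → A →ₗ[ℝ] A) (c : VF → VF → VF) (α : VF → VF → VF → A) (V X Y Z : VF) : A :=
  D V (α X Y Z) - α (c V X) Y Z - α X (c V Y) Z - α X Y (c V Z)

/-- The covariant derivative of a vector-valued 3-tensor. -/
def covV3 {VF : Type*} [LieRing VF] [LieAlgebra ℝ VF]
    (c : VF → VF → VF) (β : VF → VF → VF → VF) (V X Y Z : VF) : VF :=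
  c V (β X Y Z) - β (c V X) Y Z - β X (c V Y) Z - β X Y (c V Z)

/-- The covariant derivative of a vector-valued 4-tensor. -/
def covV4 {VF : Type*} [LieRing VF] [LieAlgebra ℝ VF]
    (c : VF → VF → VF) (γ : VF → VF → VF → VF → VF) (U V X Y Z : VF) : VF :=
  c U (γ V X Y Z) - γ (c U V) X Y Z - γ V (c U X) Y Z - γ V X (c U Y) Z - γ V X Y (c U Z)

/-- The exterior derivative of the 1-form `θ`. -/
def dOne {VF A : Type*} [LieRing VF] [LieAlgebra ℝ VF] [CommRing A] [Algebra ℝ A]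
    (D : VF → A →ₗ[ℝ] A) (θ : VF →ₗ[ℝ] A) (X Y : VF) : A :=
  D X (θ Y) - D Y (θ X) - θ ⁅X, Y⁆

/-!
Recurrence `∇̃ξ = θ ⊗ ξ` gives `R̃(X, Y)ξ = dθ(X, Y) ξ`. If a tensor field `β` is `A`-linear in its
last slot and `β(…)ξ = ω(…) ξ`, then `(∇̃β)(…)ξ = (∇̃ω)(…) ξ`: in `∇̃_V (ω ξ) - β(…, ∇̃_V ξ)` the two
terms `θ(V) ω ξ` cancel. Hence `(∇̃∇̃R̃)(…)ξ = (∇̃∇̃dθ)(…) ξ` and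
`(∇̃R̃)(…)ξ = (∇̃dθ)(…) ξ`, and the left-hand sides vanish by hypothesis; as `a • ξ = 0` forces
`a = 0`, so do the right-hand sides.
-/

/-- The Jacobi identity applied to `X, Y, a • Z` makes the anchor `D` a Lie algebra morphism,
up to annihilating `Z`. -/
theorem anchor_lie_smul_eq_zero {VF A : Type*} [LieRing VF] [CommRing A] [Module A VF]
    (D : VF → A → A)
    (hbr : ∀ (X : VF) (a : A) (Y : VF), ⁅X, a • Y⁆ = D X a • Y + a • ⁅X, Y⁆)
    (a : A) (X Y Z : VF) :
    (D X (D Y a) - D Y (D X a) - D ⁅X, Y⁆ a) • Z = 0 := by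
  have h := leibniz_lie X Y (a • Z)
  rw [hbr Y a Z, lie_add, hbr X (D Y a) Z, hbr X a ⁅Y, Z⁆, hbr ⁅X, Y⁆ a Z, hbr X a Z, lie_add,
    hbr Y (D X a) Z, hbr Y a ⁅X, Z⁆, leibniz_lie X Y Z] at h
  rw [sub_smul, sub_smul]
  linear_combination (norm := module) h

theorem anchor_lie_apply {VF A : Type*} [LieRing VF] [CommRing A] [Module A VF]
    (D : VF → A → A) {ξ : VF} (hreg : ∀ a : A, a • ξ = 0 → a = 0)
    (hbr : ∀ (X : VF) (a : A) (Y : VF), ⁅X, a • Y⁆ = D X a • Y + a • ⁅X, Y⁆)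
    (a : A) (X Y : VF) :
    D ⁅X, Y⁆ a = D X (D Y a) - D Y (D X a) := by
  linear_combination -hreg _ (anchor_lie_smul_eq_zero D hbr a X Y ξ)

section Connection

variable {VF A : Type*} [LieRing VF] [LieAlgebra ℝ VF] [CommRing A] [Algebra ℝ A] [Module A VF]
  {D : VF → A →ₗ[ℝ] A} {c : VF → VF →ₗ[ℝ] VF}

theorem curvOf_add_right (X Y : VF) (u v : VF) :
    curvOf (fun u v => c u v) X Y (u + v)
      = curvOf (fun u v => c u v) X Y u + curvOf (fun u v => c u v) X Y v := by
  simp only [curvOf, map_add]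
  abel

variable (hLeib : ∀ (X : VF) (a : A) (Y : VF), c X (a • Y) = D X a • Y + a • c X Y)
include hLeib

theorem curvOf_smul_right
    (hDlie : ∀ (a : A) (X Y : VF), D ⁅X, Y⁆ a = D X (D Y a) - D Y (D X a))
    (X Y : VF) (a : A) (Z : VF) :
    curvOf (fun u v => c u v) X Y (a • Z) = a • curvOf (fun u v => c u v) X Y Z := by
  simp only [curvOf]
  rw [hLeib Y a Z, hLeib X a Z, hLeib ⁅X, Y⁆ a Z, map_add, map_add, hLeib X (D Y a) Z,
    hLeib X a (c Y Z), hLeib Y (D X a) Z, hLeib Y a (c X Z), hDlie a X Y]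
  module

theorem curvOf_apply_of_recurrent {ξ : VF} {θ : VF →ₗ[ℝ] A}
    (hrec : ∀ X : VF, c X ξ = θ X • ξ) (X Y : VF) :
    curvOf (fun u v => c u v) X Y ξ = dOne D θ X Y • ξ := by
  simp only [curvOf, dOne]
  rw [hrec Y, hrec X, hrec ⁅X, Y⁆, hLeib X (θ Y) ξ, hLeib Y (θ X) ξ, hrec X, hrec Y]
  module

theorem covV3_smul_right {β : VF → VF → VF → VF}
    (hβadd : ∀ (X Y : VF) (u v : VF), β X Y (u + v) = β X Y u + β X Y v)
    (hβsmul : ∀ (X Y : VF) (a : A) (Z : VF), β X Y (a • Z) = a • β X Y Z)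
    (V X Y : VF) (a : A) (Z : VF) :
    covV3 (fun u v => c u v) β V X Y (a • Z) = a • covV3 (fun u v => c u v) β V X Y Z := by
  simp only [covV3]
  rw [hβsmul X Y a Z, hβsmul (c V X) Y a Z, hβsmul X (c V Y) a Z, hLeib V a Z, hβadd,
    hβsmul, hβsmul, hLeib V a (β X Y Z)]
  module

theorem covV3_apply_of_recurrent {β : VF → VF → VF → VF}
    (hβsmul : ∀ (X Y : VF) (a : A) (Z : VF), β X Y (a • Z) = a • β X Y Z)
    {ξ : VF} {θ : VF →ₗ[ℝ] A} {ω : VF → VF → A}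
    (hrec : ∀ X : VF, c X ξ = θ X • ξ) (hβξ : ∀ X Y : VF, β X Y ξ = ω X Y • ξ) (V X Y : VF) :
    covV3 (fun u v => c u v) β V X Y ξ = covT2 D (fun u v => c u v) ω V X Y • ξ := by
  simp only [covV3, covT2]
  rw [hβξ X Y, hβξ (c V X) Y, hβξ X (c V Y), hrec V, hβsmul, hβξ X Y, hLeib, hrec V]
  module

theorem covV4_apply_of_recurrent {γ : VF → VF → VF → VF → VF}
    (hγsmul : ∀ (V X Y : VF) (a : A) (Z : VF), γ V X Y (a • Z) = a • γ V X Y Z)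
    {ξ : VF} {θ : VF →ₗ[ℝ] A} {α : VF → VF → VF → A}
    (hrec : ∀ X : VF, c X ξ = θ X • ξ) (hγξ : ∀ V X Y : VF, γ V X Y ξ = α V X Y • ξ)
    (U V X Y : VF) :
    covV4 (fun u v => c u v) γ U V X Y ξ = covT3 D (fun u v => c u v) α U V X Y • ξ := by
  simp only [covV4, covT3]
  rw [hγξ V X Y, hγξ (c U V) X Y, hγξ V (c U X) Y, hγξ V X (c U Y), hrec U, hγsmul, hγξ V X Y,
    hLeib, hrec U]
  module

end Connection

theorem stmt14_general {VF A : Type*} [LieRing VF] [LieAlgebra ℝ VF] [CommRing A] [Algebra ℝ A]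
    [Module A VF]
    (D : VF →ₗ[ℝ] A →ₗ[ℝ] A)
    (hbr : ∀ (X : VF) (a : A) (Y : VF), ⁅X, a • Y⁆ = D X a • Y + a • ⁅X, Y⁆)
    (tn : VF →ₗ[ℝ] VF →ₗ[ℝ] VF)
    (hLeib : ∀ (X : VF) (a : A) (Y : VF), tn X (a • Y) = D X a • Y + a • tn X Y)
    (ξ : VF) (θ : VF →ₗ[ℝ] A)
    (hreg : ∀ a : A, a • ξ = 0 → a = 0)
    (hrec : ∀ X : VF, tn X ξ = θ X • ξ)
    (h2sym : ∀ U V X Y Z : VF,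
      covV4 (fun u v => tn u v) (covV3 (fun u v => tn u v) (curvOf (fun u v => tn u v)))
        U V X Y Z = 0) :
    (∀ V X Y Z : VF,
      covT3 (fun u => D u) (fun u v => tn u v)
        (covT2 (fun u => D u) (fun u v => tn u v) (dOne (fun u => D u) θ)) V X Y Z = 0) ∧
    ((∀ X Y Z W : VF,
        covV3 (fun u v => tn u v) (curvOf (fun u v => tn u v)) X Y Z W = 0) →
      ∀ X Y Z : VF,
        covT2 (fun u => D u) (fun u v => tn u v) (dOne (fun u => D u) θ) X Y Z = 0) := by
  have hRsmul := curvOf_smul_right hLeib (anchor_lie_apply (fun u => D u) hreg hbr)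
  have hRξ := curvOf_apply_of_recurrent hLeib hrec
  have hDRξ := covV3_apply_of_recurrent hLeib hRsmul hrec hRξ
  have hDDRξ :=
    covV4_apply_of_recurrent hLeib (covV3_smul_right hLeib curvOf_add_right hRsmul) hrec hDRξ
  refine ⟨fun V X Y Z => hreg _ ?_, fun hpar X Y Z => hreg _ ?_⟩
  · rw [← hDDRξ, h2sym]
  · rw [← hDRξ, hpar]

/-- Let `∇̃` be a 2-symmetric metric connection (`∇̃∇̃R̃ = 0`) on a
Lorentzian manifold and `ξ` a `∇̃`-recurrent vector field with `∇̃ξ = θ ⊗ ξ`.  Then `∇̃(dθ)`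
is a `∇̃`-parallel tensor field; if moreover `∇̃R̃ = 0`, then `dθ` itself is `∇̃`-parallel. -/
theorem stmt14 {VF A : Type*} [LieRing VF] [LieAlgebra ℝ VF] [CommRing A] [Algebra ℝ A]
    [Module A VF] [IsScalarTower ℝ A VF]
    (D : VF →ₗ[ℝ] A →ₗ[ℝ] A)
    (hD : ∀ (X : VF) (a b : A), D X (a * b) = a * D X b + D X a * b)
    (hDA : ∀ (a : A) (X : VF) (b : A), D (a • X) b = a * D X b)
    (hbr : ∀ (X : VF) (a : A) (Y : VF), ⁅X, a • Y⁆ = D X a • Y + a • ⁅X, Y⁆)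
    (g : VF →ₗ[ℝ] VF →ₗ[ℝ] A)
    (hgsym : ∀ X Y : VF, g X Y = g Y X)
    (hgnd : ∀ X : VF, (∀ Z : VF, g X Z = 0) → X = 0)
    (tn : VF →ₗ[ℝ] VF →ₗ[ℝ] VF)
    (hcompt : ∀ X Y Z : VF, D X (g Y Z) = g (tn X Y) Z + g Y (tn X Z))
    (hLeib : ∀ (X : VF) (a : A) (Y : VF), tn X (a • Y) = D X a • Y + a • tn X Y)
    (hAlin : ∀ (a : A) (X Y : VF), tn (a • X) Y = a • tn X Y)
    (ξ : VF) (θ : VF →ₗ[ℝ] A)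
    (hθA : ∀ (a : A) (X : VF), θ (a • X) = a * θ X)
    (hreg : ∀ a : A, a • ξ = 0 → a = 0)
    (hrec : ∀ X : VF, tn X ξ = θ X • ξ)
    (h2sym : ∀ U V X Y Z : VF,
      covV4 (fun u v => tn u v) (covV3 (fun u v => tn u v) (curvOf (fun u v => tn u v)))
        U V X Y Z = 0) :
    (∀ V X Y Z : VF,
      covT3 (fun u => D u) (fun u v => tn u v)
        (covT2 (fun u => D u) (fun u v => tn u v) (dOne (fun u => D u) θ)) V X Y Z = 0) ∧
    ((∀ X Y Z W : VF,
        covV3 (fun u v => tn u v) (curvOf (fun u v => tn u v)) X Y Z W = 0) →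
      ∀ X Y Z : VF,
        covT2 (fun u => D u) (fun u v => tn u v) (dOne (fun u => D u) θ) X Y Z = 0) :=
  stmt14_general D hbr tn hLeib ξ θ hreg hrec h2sym
end

section
/- Consider the 3-dimensional Lie algebra m with basis (e_-, e_1, e_+) and brackets [e_-,e_1] = −2a e_-, [e_-,e_+] = 2a e_1, [e_1,e_+] = −2a e_+ + ((2ac+1)/(2a)) e_-, where a ≠ 0 and c ∈ ℝ. Then m is perfect ([m,m] = m) and its Killing form is nondegenerate and indefinite; hence m ≅ sl(2,ℝ). -/
/-!
Put `h = a⁻¹ e₁`, `e = e₋` and `f = (2a²)⁻¹ e₊ - (2ac+1)/(16a⁴) e₋`; then `(h, e, f)` is an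
`sl₂`-triple. Its members are eigenvectors of `ad h` for the distinct eigenvalues `0, 2, -2`, so
they form a basis, in which the structure constants are those of `sl(2)`. Hence `𝔪 ≅ sl(2,ℝ)`,
`h = [e,f]`, `2e = [h,e]`, `-2f = [h,f]` show that `𝔪` is perfect, and the Killing form has Gram
matrix `[[8,0,0],[0,0,4],[0,4,0]]`: nondegenerate, with `B(h,h) = 8` and `B(e-f,e-f) = -8`.
-/

open Module LieAlgebra.SpecialLinear

lemma LinearMap.map_lie_of_basis {ι R L L' : Type*} [Fintype ι] [CommRing R]
    [LieRing L] [LieAlgebra R L] [LieRing L'] [LieAlgebra R L'] (b : Basis ι R L) (φ : L →ₗ[R] L')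
    (hφ : ∀ i j, φ ⁅b i, b j⁆ = ⁅φ (b i), φ (b j)⁆) (x y : L) : φ ⁅x, y⁆ = ⁅φ x, φ y⁆ := by
  rw [← b.sum_repr x, ← b.sum_repr y]
  simp only [map_sum, map_smul, sum_lie, lie_sum, smul_lie, lie_smul, hφ]

namespace IsSl2Triple

section CommRing

variable {R L : Type*} [CommRing R] [LieRing L] [LieAlgebra R L] {h e f : L}

lemma lie_e_h (t : IsSl2Triple h e f) : ⁅e, h⁆ = -(2 • e) := by
  rw [← lie_skew, t.lie_h_e_nsmul]

lemma lie_f_h (t : IsSl2Triple h e f) : ⁅f, h⁆ = 2 • f := by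
  rw [← lie_skew, t.lie_h_f_nsmul, neg_neg]

lemma lie_f_e (t : IsSl2Triple h e f) : ⁅f, e⁆ = -h := by
  rw [← lie_skew, t.lie_e_f]

lemma linearIndependent [IsDomain R] [CharZero R] [IsTorsionFree R L] (t : IsSl2Triple h e f) :
    LinearIndependent R ![h, e, f] := by
  refine (LieAlgebra.ad R L h).eigenvectors_linearIndependent' ![0, 2, -2] ?_ _ fun i ↦ ?_
  · intro i j hij
    fin_cases i <;> fin_cases j <;> norm_num at hij <;> rfl
  · fin_cases i <;> refine ⟨Module.End.mem_eigenspace_iff.mpr ?_, ?_⟩ <;>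
      simp [t.lie_h_e_smul R, t.lie_lie_smul_f R, t.h_ne_zero, t.e_ne_zero, t.f_ne_zero]

end CommRing

section Field

variable {K L L' : Type*} [Field K] [CharZero K] [LieRing L] [LieAlgebra K L]
  [LieRing L'] [LieAlgebra K L'] {h e f : L} {h' e' f' : L'}

noncomputable def basis (t : IsSl2Triple h e f) (hL : finrank K L = 3) : Basis (Fin 3) K L :=
  basisOfLinearIndependentOfCardEqFinrank t.linearIndependent (by simp [hL])

@[simp] lemma coe_basis (t : IsSl2Triple h e f) (hL : finrank K L = 3) :
    ⇑(t.basis hL) = ![h, e, f] :=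
  coe_basisOfLinearIndependentOfCardEqFinrank ..

@[simp] lemma basis_repr_h (t : IsSl2Triple h e f) (hL : finrank K L = 3) :
    (t.basis hL).repr h = Finsupp.single 0 1 := by
  simpa using (t.basis hL).repr_self 0

@[simp] lemma basis_repr_e (t : IsSl2Triple h e f) (hL : finrank K L = 3) :
    (t.basis hL).repr e = Finsupp.single 1 1 := by
  simpa using (t.basis hL).repr_self 1

@[simp] lemma basis_repr_f (t : IsSl2Triple h e f) (hL : finrank K L = 3) :
    (t.basis hL).repr f = Finsupp.single 2 1 := by
  simpa using (t.basis hL).repr_self 2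

noncomputable def lieEquiv (t : IsSl2Triple h e f) (hL : finrank K L = 3)
    (t' : IsSl2Triple h' e' f') (hL' : finrank K L' = 3) :
    L ≃ₗ⁅K⁆ L' :=
  let φ := (t.basis hL).equiv (t'.basis hL') (Equiv.refl _)
  have hh : φ h = h' := by simpa using (t.basis hL).equiv_apply 0 (t'.basis hL') (Equiv.refl _)
  have he : φ e = e' := by simpa using (t.basis hL).equiv_apply 1 (t'.basis hL') (Equiv.refl _)
  have hf : φ f = f' := by simpa using (t.basis hL).equiv_apply 2 (t'.basis hL') (Equiv.refl _)
  { φ with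
    map_lie' := fun {x y} ↦ φ.toLinearMap.map_lie_of_basis (t.basis hL) (fun i j ↦ by
      fin_cases i <;> fin_cases j <;>
        simp [hh, he, hf, t.lie_e_f, t.lie_h_e_nsmul, t.lie_h_f_nsmul, t.lie_e_h, t.lie_f_h,
          t.lie_f_e, t'.lie_e_f, t'.lie_h_e_nsmul, t'.lie_h_f_nsmul, t'.lie_e_h, t'.lie_f_h,
          t'.lie_f_e]) x y }

lemma toMatrix_killingForm (t : IsSl2Triple h e f) (hL : finrank K L = 3) :
    LinearMap.BilinForm.toMatrix (t.basis hL) (killingForm K L) =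
      !![8, 0, 0; 0, 0, 4; 0, 4, 0] := by
  ext i j
  rw [LinearMap.BilinForm.toMatrix_apply, killingForm_apply_apply,
    LinearMap.trace_eq_matrix_trace K (t.basis hL), Matrix.trace, Fin.sum_univ_three]
  fin_cases i <;> fin_cases j <;>
    simp [LinearMap.toMatrix_apply, t.lie_e_f, t.lie_h_e_smul K, t.lie_lie_smul_f K, t.lie_e_h,
      t.lie_f_h, t.lie_f_e] <;> norm_num

lemma killingForm_nondegenerate (t : IsSl2Triple h e f) (hL : finrank K L = 3) :
    (killingForm K L).Nondegenerate := by
  rw [LinearMap.BilinForm.nondegenerate_iff_det_ne_zero (t.basis hL), t.toMatrix_killingForm hL]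
  simp [Matrix.det_fin_three]

lemma killingForm_apply_basis (t : IsSl2Triple h e f) (hL : finrank K L = 3) (i j : Fin 3) :
    killingForm K L (t.basis hL i) (t.basis hL j) = !![(8 : K), 0, 0; 0, 0, 4; 0, 4, 0] i j := by
  rw [← t.toMatrix_killingForm hL, LinearMap.BilinForm.toMatrix_apply]

lemma killingForm_h_h (t : IsSl2Triple h e f) (hL : finrank K L = 3) :
    killingForm K L h h = 8 := by
  simpa using t.killingForm_apply_basis hL 0 0

lemma killingForm_e_sub_f (t : IsSl2Triple h e f) (hL : finrank K L = 3) :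
    killingForm K L (e - f) (e - f) = -8 := by
  have hB := t.killingForm_apply_basis hL
  have hee : killingForm K L e e = 0 := by simpa using hB 1 1
  have hef : killingForm K L e f = 4 := by simpa using hB 1 2
  have hfe : killingForm K L f e = 4 := by simpa using hB 2 1
  have hff : killingForm K L f f = 0 := by simpa using hB 2 2
  simp only [map_sub, LinearMap.sub_apply, hee, hef, hfe, hff]
  norm_num

lemma lie_top_eq_top (t : IsSl2Triple h e f) (hL : finrank K L = 3) :
    ⁅(⊤ : LieIdeal K L), (⊤ : LieIdeal K L)⁆ = ⊤ := by
  have mem : ∀ x y : L, ⁅x, y⁆ ∈ ⁅(⊤ : LieIdeal K L), (⊤ : LieIdeal K L)⁆ := fun x y ↦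
    LieSubmodule.lie_mem_lie trivial trivial
  rw [eq_top_iff, ← LieSubmodule.toSubmodule_le_toSubmodule, LieSubmodule.top_toSubmodule,
    ← (t.basis hL).span_eq, Submodule.span_le]
  rintro _ ⟨i, rfl⟩
  fin_cases i
  · simpa [t.lie_e_f] using mem e f
  · simpa [t.lie_h_e_smul K] using Submodule.smul_mem _ (2⁻¹ : K) (mem h e)
  · simpa [t.lie_lie_smul_f K] using Submodule.smul_mem _ (-2⁻¹ : K) (mem h f)

end Field

end IsSl2Triple

namespace LieAlgebra.SpecialLinear

lemma finrank_sl (K n : Type*) [Field K] [Fintype n] [DecidableEq n] [Nonempty n] :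
    finrank K (sl n K) = Fintype.card n ^ 2 - 1 := by
  have hrange : LinearMap.range (Matrix.traceLinearMap n K K) = ⊤ :=
    LinearMap.range_eq_top.mpr Matrix.trace_surjective
  have := LinearMap.finrank_range_add_finrank_ker (Matrix.traceLinearMap n K K)
  rw [hrange, finrank_top, finrank_self, Module.finrank_matrix, finrank_self, mul_one] at this
  change finrank K (LinearMap.ker (Matrix.traceLinearMap n K K)) = _
  rw [sq]
  omega

lemma isSl2Triple_single (R : Type*) [CommRing R] [Nontrivial R] :
    IsSl2Triple (singleSubSingle 0 1 1 : sl (Fin 2) R) (single 0 1 zero_ne_one 1)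
      (single 1 0 one_ne_zero 1) where
  h_ne_zero h := by simpa using congr_arg (fun x : sl (Fin 2) R ↦ x.val 0 0) h
  lie_e_f := by ext i j; fin_cases i <;> fin_cases j <;> norm_num [Ring.lie_def]
  lie_h_e_nsmul := by ext i j; fin_cases i <;> fin_cases j <;> norm_num [Ring.lie_def]
  lie_h_f_nsmul := by ext i j; fin_cases i <;> fin_cases j <;> norm_num [Ring.lie_def]

end LieAlgebra.SpecialLinear

lemma isSl2Triple_of_lie_eq {L : Type*} [LieRing L] [LieAlgebra ℝ L] {a c : ℝ} (ha : a ≠ 0)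
    {eₘ e₁ eₚ : L} (he₁ : e₁ ≠ 0)
    (hₘ₁ : ⁅eₘ, e₁⁆ = (-(2 * a)) • eₘ) (hₘₚ : ⁅eₘ, eₚ⁆ = (2 * a) • e₁)
    (h₁ₚ : ⁅e₁, eₚ⁆ = (-(2 * a)) • eₚ + ((2 * a * c + 1) / (2 * a)) • eₘ) :
    IsSl2Triple (a⁻¹ • e₁) eₘ ((2 * a ^ 2)⁻¹ • eₚ - ((2 * a * c + 1) / (16 * a ^ 4)) • eₘ) where
  h_ne_zero := smul_ne_zero (inv_ne_zero ha) he₁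
  lie_e_f := by
    simp only [lie_sub, lie_smul, lie_self, hₘₚ, smul_zero, sub_zero, smul_smul]
    congr 1
    field_simp
  lie_h_e_nsmul := by
    rw [smul_lie, ← lie_skew, hₘ₁]
    match_scalars
    field_simp
  lie_h_f_nsmul := by
    have h₁ₘ : ⁅e₁, eₘ⁆ = (2 * a) • eₘ := by rw [← lie_skew, hₘ₁, neg_smul, neg_neg]
    simp only [smul_lie, lie_sub, lie_smul, h₁ₚ, h₁ₘ]
    match_scalars <;> field_simp
    ring

/-- Consider the 3-dimensional Lie algebra `𝔪` with basis `(e₋, e₁, e₊)`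
and brackets `[e₋,e₁] = −2a e₋`, `[e₋,e₊] = 2a e₁`,
`[e₁,e₊] = −2a e₊ + ((2ac+1)/(2a)) e₋`, with `a ≠ 0`.  Then `𝔪` is perfect, its Killing form
is nondegenerate and indefinite, and hence `𝔪 ≅ sl(2,ℝ)`. -/
theorem stmt17 {L : Type*} [LieRing L] [LieAlgebra ℝ L] (a c : ℝ) (ha : a ≠ 0)
    (b : Module.Basis (Fin 3) ℝ L)
    (h01 : ⁅b 0, b 1⁆ = (-(2*a)) • b 0)
    (h02 : ⁅b 0, b 2⁆ = (2*a) • b 1)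
    (h12 : ⁅b 1, b 2⁆ = (-(2*a)) • b 2 + ((2*a*c+1)/(2*a)) • b 0) :
    (⁅(⊤ : LieIdeal ℝ L), (⊤ : LieIdeal ℝ L)⁆ = ⊤) ∧
    (killingForm ℝ L).Nondegenerate ∧
    (∃ x : L, 0 < killingForm ℝ L x x) ∧
    (∃ y : L, killingForm ℝ L y y < 0) ∧
    Nonempty (L ≃ₗ⁅ℝ⁆ ↥(LieAlgebra.SpecialLinear.sl (Fin 2) ℝ)) := by
  have t := isSl2Triple_of_lie_eq ha (b.ne_zero 1) h01 h02 h12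
  have hL : finrank ℝ L = 3 := by simp [finrank_eq_card_basis b]
  have hsl : finrank ℝ (sl (Fin 2) ℝ) = 3 := by simp [finrank_sl]
  exact ⟨t.lie_top_eq_top hL, t.killingForm_nondegenerate hL,
    ⟨_, by rw [t.killingForm_h_h hL]; norm_num⟩, ⟨_, by rw [t.killingForm_e_sub_f hL]; norm_num⟩,
    ⟨t.lieEquiv hL (isSl2Triple_single ℝ) hsl⟩⟩
end
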